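/- There exists a constant C > 0 such that for every k ∈ ℕ and every ρ ≥ 0, the k-th derivative of the cardinal sine function sinc(ρ) = sin(ρ)/ρ (with sinc(0)=1) satisfies |sinc^{(k)}(ρ)| ≤ C_k (1 + ρ)^(−1) for some constant C_k depending only on k. -/

import Mathlib

/-- The cardinal sine function. -/
noncomputable def sinc (ρ : ℝ) : ℝ := if ρ = 0 then 1 else Real.sin ρ / ρ

lemma sinc_eq_dslope : sinc = dslope Real.sin 0 := by
  funext x
  by_cases hx : x = 0
  · subst hx
    simp [sinc, dslope_same, Real.deriv_sin]
  · rw [dslope_of_ne _ hx]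
    simp [sinc, hx, slope, Real.sin_zero, div_eq_inv_mul]

lemma analyticAt_rsin (x : ℝ) : AnalyticAt ℝ Real.sin x := by
  have hc : AnalyticAt ℂ Complex.sin (x : ℂ) := by
    have : AnalyticAt ℂ (fun z : ℂ =>
        (Complex.exp (-z * Complex.I) - Complex.exp (z * Complex.I)) * Complex.I / 2)
        (x : ℂ) := by
      apply AnalyticAt.div
      · exact (((analyticAt_id.neg.mul analyticAt_const).cexp).sub
          ((analyticAt_id.mul analyticAt_const).cexp)).mul analyticAt_const
      · exact analyticAt_const
      · norm_num
    exact this.congr (Filter.Eventually.of_forall fun z => rfl)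
  have h1 : AnalyticAt ℝ (fun y : ℝ => Complex.sin (Complex.ofRealCLM y)) x :=
    (hc.restrictScalars).comp (Complex.ofRealCLM.analyticAt x)
  have h2 : AnalyticAt ℝ (fun y : ℝ => Complex.reCLM (Complex.sin (Complex.ofRealCLM y))) x :=
    (Complex.reCLM.analyticAt _).comp h1
  exact h2.congr (Filter.Eventually.of_forall fun y => by
    rfl)

lemma contDiff_sinc : ContDiff ℝ (⊤ : ℕ∞) sinc := by
  rw [contDiff_iff_contDiffAt]
  intro x
  by_cases hx : x = 0
  · subst hx
    rw [sinc_eq_dslope]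
    obtain ⟨p, hp⟩ := analyticAt_rsin 0
    exact (hp.has_fpower_series_dslope_fslope.analyticAt).contDiffAt
  · have hev : sinc =ᶠ[nhds x] fun y => Real.sin y * y⁻¹ := by
      filter_upwards [isOpen_compl_singleton.mem_nhds (by simpa using hx)] with y hy
      simp only [Set.mem_compl_iff, Set.mem_singleton_iff] at hy
      simp [sinc, hy, div_eq_mul_inv]
    exact ContDiffAt.congr_of_eventuallyEq
      (Real.contDiff_sin.contDiffAt.mul (contDiffAt_inv ℝ hx)) hev

lemma abs_iteratedDeriv_sin_le (n : ℕ) (x : ℝ) : |iteratedDeriv n Real.sin x| ≤ 1 := by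
  have key : ∀ n : ℕ, iteratedDeriv n Real.sin = Real.sin ∨
      iteratedDeriv n Real.sin = Real.cos ∨
      iteratedDeriv n Real.sin = (fun y => -Real.sin y) ∨
      iteratedDeriv n Real.sin = (fun y => -Real.cos y) := by
    intro n
    induction n with
    | zero => left; simp [iteratedDeriv_zero]
    | succ m ih =>
      rw [iteratedDeriv_succ]
      rcases ih with h | h | h | h <;> rw [h]
      · right; left; exact Real.deriv_sin
      · right; right; left
        funext y; simp [Real.deriv_cos]
      · right; right; right
        funext y
        rw [deriv.fun_neg]
        simp [Real.deriv_sin]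
      · left
        funext y
        rw [deriv.fun_neg]
        simp [Real.deriv_cos]
  rcases key n with h | h | h | h <;> rw [h] <;>
    simp [abs_le] <;>
    constructor <;>
    first
      | linarith [Real.neg_one_le_sin x, Real.sin_le_one x]
      | linarith [Real.neg_one_le_cos x, Real.cos_le_one x]

lemma iteratedDeriv_inv_eq (n : ℕ) :
    ∀ x : ℝ, x ≠ 0 →
      iteratedDeriv n (fun y : ℝ => y⁻¹) x = (-1) ^ n * (n.factorial : ℝ) * x ^ (-(n : ℤ) - 1) := by
  induction n with
  | zero =>
    intro x hx
    simp [iteratedDeriv_zero, zpow_neg, zpow_one]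
  | succ m ih =>
    intro x hx
    rw [iteratedDeriv_succ]
    have hev : iteratedDeriv m (fun y : ℝ => y⁻¹) =ᶠ[nhds x]
        fun y => (-1) ^ m * (m.factorial : ℝ) * y ^ (-(m : ℤ) - 1) := by
      filter_upwards [isOpen_compl_singleton.mem_nhds (by simpa using hx)] with y hy
      simp only [Set.mem_compl_iff, Set.mem_singleton_iff] at hy
      exact ih y hy
    rw [hev.deriv_eq]
    rw [deriv_const_mul _ (differentiableAt_zpow.mpr (Or.inl hx))]
    rw [deriv_zpow]
    have hexp : (-(m : ℤ) - 1 - 1) = (-((m : ℤ) + 1) - 1) := by ring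
    rw [hexp]
    have : ((-(m : ℤ) - 1 : ℤ) : ℝ) = -((m : ℝ) + 1) := by push_cast; ring
    rw [this]
    rw [Nat.factorial_succ]
    push_cast
    ring

theorem stmt4 (k : ℕ) :
    ∃ C > 0, ∀ ρ : ℝ, 0 ≤ ρ → |iteratedDeriv k sinc ρ| ≤ C * (1 + ρ)⁻¹ := by
  -- bound on the compact part [0,1]
  obtain ⟨M, hM⟩ := (isCompact_Icc (a := (0:ℝ)) (b := 1)).exists_bound_of_continuousOn
    ((contDiff_sinc.continuous_iteratedDeriv k (mod_cast le_top)).continuousOn)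
  -- constant for the Leibniz estimate
  set D : ℝ := ∑ i ∈ Finset.range (k + 1), (k.choose i : ℝ) * ((k - i).factorial : ℝ) with hD
  have hD0 : 0 ≤ D := by
    apply Finset.sum_nonneg
    intro i _
    positivity
  refine ⟨2 * |M| + 2 * D + 1, by positivity, ?_⟩
  intro ρ hρ
  have h1ρ : 0 < 1 + ρ := by linarith
  by_cases hρ1 : ρ ≤ 1
  · -- compact part
    have hb : |iteratedDeriv k sinc ρ| ≤ |M| :=
      le_trans (hM ρ ⟨hρ, hρ1⟩) (le_abs_self M)
    have h2 : (1:ℝ) + ρ ≤ 2 := by linarith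
    have hinv : (2:ℝ)⁻¹ ≤ (1 + ρ)⁻¹ := by
      apply inv_anti₀ h1ρ h2
    calc |iteratedDeriv k sinc ρ| ≤ |M| := hb
      _ = (2 * |M|) * (2:ℝ)⁻¹ := by ring
      _ ≤ (2 * |M|) * (1 + ρ)⁻¹ := by
          apply mul_le_mul_of_nonneg_left hinv (by positivity)
      _ ≤ (2 * |M| + 2 * D + 1) * (1 + ρ)⁻¹ := by
          apply mul_le_mul_of_nonneg_right _ (le_of_lt (inv_pos.mpr h1ρ))
          linarith
  · -- ρ ≥ 1 : Leibniz estimate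
    push_neg at hρ1
    have hρ0 : 0 < ρ := lt_trans one_pos hρ1
    set s : Set ℝ := Set.Ioi (0:ℝ) with hs
    have hso : IsOpen s := isOpen_Ioi
    have hρs : ρ ∈ s := hρ0
    have heq : Set.EqOn sinc (fun y => Real.sin y * y⁻¹) s := by
      intro y hy
      have : y ≠ 0 := ne_of_gt hy
      simp [sinc, this, div_eq_mul_inv]
    -- rewrite the iterated derivative
    have hkey : |iteratedDeriv k sinc ρ| =
        ‖iteratedFDerivWithin ℝ k (fun y => Real.sin y * y⁻¹) s ρ‖ := by
      rw [← Real.norm_eq_abs, ← norm_iteratedFDeriv_eq_norm_iteratedDeriv,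
        ← iteratedFDerivWithin_of_isOpen k hso hρs,
        iteratedFDerivWithin_congr heq hρs]
    have hsin : ContDiffOn ℝ (k : WithTop ℕ∞) Real.sin s := Real.contDiff_sin.contDiffOn
    have hinv : ContDiffOn ℝ (k : WithTop ℕ∞) (fun y : ℝ => y⁻¹) s := by
      intro y hy
      exact (contDiffAt_inv ℝ (ne_of_gt hy)).contDiffWithinAt
    have hleib := norm_iteratedFDerivWithin_mul_le hsin hinv hso.uniqueDiffOn hρs
      (le_refl (k : WithTop ℕ∞))
    -- bound each factor
    have hterm : ∀ i ∈ Finset.range (k + 1),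
        (k.choose i : ℝ) * ‖iteratedFDerivWithin ℝ i Real.sin s ρ‖ *
          ‖iteratedFDerivWithin ℝ (k - i) (fun y : ℝ => y⁻¹) s ρ‖ ≤
        (k.choose i : ℝ) * ((k - i).factorial : ℝ) * ρ⁻¹ := by
      intro i _
      have hsb : ‖iteratedFDerivWithin ℝ i Real.sin s ρ‖ ≤ 1 := by
        rw [iteratedFDerivWithin_of_isOpen i hso hρs,
          norm_iteratedFDeriv_eq_norm_iteratedDeriv, Real.norm_eq_abs]
        exact abs_iteratedDeriv_sin_le i ρ
      have hib : ‖iteratedFDerivWithin ℝ (k - i) (fun y : ℝ => y⁻¹) s ρ‖ ≤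
          ((k - i).factorial : ℝ) * ρ⁻¹ := by
        rw [iteratedFDerivWithin_of_isOpen _ hso hρs,
          norm_iteratedFDeriv_eq_norm_iteratedDeriv, Real.norm_eq_abs,
          iteratedDeriv_inv_eq (k - i) ρ (ne_of_gt hρ0)]
        rw [abs_mul, abs_mul]
        have h1 : |(-1 : ℝ) ^ (k - i)| = 1 := by
          rw [abs_pow, abs_neg, abs_one, one_pow]
        rw [h1, one_mul]
        have h2 : |(((k - i).factorial : ℕ) : ℝ)| = (((k - i).factorial : ℕ) : ℝ) := by
          exact abs_of_nonneg (by positivity)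
        rw [h2]
        apply mul_le_mul_of_nonneg_left _ (by positivity)
        have h3 : ρ ^ (-((k - i : ℕ) : ℤ) - 1) = (ρ ^ ((k - i : ℕ) + 1))⁻¹ := by
          rw [show (-((k - i : ℕ) : ℤ) - 1) = -((((k - i) + 1 : ℕ) : ℤ)) by push_cast; ring,
            zpow_neg, zpow_natCast]
        rw [h3, abs_of_nonneg (by positivity)]
        apply inv_anti₀ hρ0
        calc ρ = ρ * 1 ^ (k - i) := by ring
          _ ≤ ρ * ρ ^ (k - i) := by
              apply mul_le_mul_of_nonneg_left _ (le_of_lt hρ0)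
              exact pow_le_pow_left₀ (by norm_num) (le_of_lt hρ1) _
          _ = ρ ^ ((k - i) + 1) := by ring
      calc (k.choose i : ℝ) * ‖iteratedFDerivWithin ℝ i Real.sin s ρ‖ *
            ‖iteratedFDerivWithin ℝ (k - i) (fun y : ℝ => y⁻¹) s ρ‖
          ≤ (k.choose i : ℝ) * 1 * (((k - i).factorial : ℕ) * ρ⁻¹) := by
            apply mul_le_mul
            · exact mul_le_mul_of_nonneg_left hsb (by positivity)
            · exact hib
            · positivity
            · positivity
        _ = (k.choose i : ℝ) * ((k - i).factorial : ℝ) * ρ⁻¹ := by ring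
    have hsum : ∑ i ∈ Finset.range (k + 1),
        (k.choose i : ℝ) * ‖iteratedFDerivWithin ℝ i Real.sin s ρ‖ *
          ‖iteratedFDerivWithin ℝ (k - i) (fun y : ℝ => y⁻¹) s ρ‖ ≤ D * ρ⁻¹ := by
      rw [hD, Finset.sum_mul]
      exact Finset.sum_le_sum hterm
    have hρinv : ρ⁻¹ ≤ 2 * (1 + ρ)⁻¹ := by
      have hhalf : (1 + ρ) / 2 ≤ ρ := by linarith
      have h0 : (0:ℝ) < (1 + ρ) / 2 := by linarith
      calc ρ⁻¹ ≤ ((1 + ρ) / 2)⁻¹ := inv_anti₀ h0 hhalf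
        _ = 2 / (1 + ρ) := by rw [inv_div]
        _ = 2 * (1 + ρ)⁻¹ := by rw [div_eq_mul_inv]
    calc |iteratedDeriv k sinc ρ| = _ := hkey
      _ ≤ _ := hleib
      _ ≤ D * ρ⁻¹ := hsum
      _ ≤ D * (2 * (1 + ρ)⁻¹) := by
          apply mul_le_mul_of_nonneg_left hρinv hD0
      _ = (2 * D) * (1 + ρ)⁻¹ := by ring
      _ ≤ (2 * |M| + 2 * D + 1) * (1 + ρ)⁻¹ := by
          apply mul_le_mul_of_nonneg_right _ (le_of_lt (inv_pos.mpr h1ρ))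
          have := abs_nonneg M
          linarith
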